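/- Let α > 0, q ≥ 2, and p ∈ (1,2] with 1/p + 1/q = 1. Let K ⊂ ℝⁿ be a centrally symmetric compact convex set with nonempty interior that is smooth and (α,q)-uniformly convex with respect to ‖·‖_K. Then the function ½‖·‖²_{K°} is (L, p)-Hölder smooth on K° with respect to ‖·‖_{K°}, where L = 2p(1 + (q/(2α))^{1/(q−1)}); that is, for all d₁, d₂ ∈ K°, ½‖d₂‖²_{K°} ≤ ½‖d₁‖²_{K°} + ⟨∇½‖·‖²_{K°}(d₁), d₂ − d₁⟩ + (L/p)‖d₂ − d₁‖^p_{K°}. -/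

import Mathlib

open scoped InnerProductSpace
open scoped Pointwise
open MeasureTheory

noncomputable section

abbrev Euc (n : ℕ) := EuclideanSpace ℝ (Fin n)

/-- The polar set `K° = {d | ⟪d, x⟫ ≤ 1 for all x ∈ K}`. -/
def polarSet {n : ℕ} (K : Set (Euc n)) : Set (Euc n) := {d | ∀ x ∈ K, ⟪d, x⟫_ℝ ≤ 1}

/-- The normal cone of `K` at `y`. -/
def normalCone {n : ℕ} (K : Set (Euc n)) (y : Euc n) : Set (Euc n) :=
  {d | ∀ x ∈ K, 0 ≤ ⟪d, y - x⟫_ℝ}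

/-- A set is smooth if at each boundary point there is exactly one normal direction in `∂K°`. -/
def SmoothSet {n : ℕ} (K : Set (Euc n)) : Prop :=
  ∀ x ∈ frontier K, ∃! d, d ∈ normalCone K x ∩ frontier (polarSet K)

/-- A set is strictly convex if the midpoint of two distinct boundary points is interior. -/
def StrictlyConvexSet {n : ℕ} (K : Set (Euc n)) : Prop :=
  ∀ x₁ ∈ frontier K, ∀ x₂ ∈ frontier K, x₁ ≠ x₂ → midpoint ℝ x₁ x₂ ∈ interior K

/-- `(α, q)`-uniform convexity of a set w.r.t. its gauge. -/
def UniformlyConvexSet {n : ℕ} (K : Set (Euc n)) (α q : ℝ) : Prop :=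
  ∀ x ∈ K, ∀ y ∈ K, ∀ z ∈ K, ∀ γ ∈ Set.Icc (0:ℝ) 1,
    γ • x + (1 - γ) • y + (α / q * (γ * (1 - γ)) * gauge K (x - y) ^ q) • z ∈ K

/-- The barrier function `F_K(x) = -ln(1 - ‖x‖_K) - ‖x‖_K`. -/
def FK {n : ℕ} (K : Set (Euc n)) (x : Euc n) : ℝ := -Real.log (1 - gauge K x) - gauge K x

/-- Fenchel conjugate of the barrier `F_K` (defined on `D_K = {‖x‖_K < 1}`). -/
def FstarK {n : ℕ} (K : Set (Euc n)) (d : Euc n) : ℝ :=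
  sSup ((fun x => ⟪x, d⟫_ℝ - FK K x) '' {x | gauge K x < 1})

/-- Bregman divergence `D_F(u, v) = F(u) - F(v) - ⟪∇F(v), u - v⟫`. -/
def breg {n : ℕ} (F : Euc n → ℝ) (u v : Euc n) : ℝ :=
  F u - F v - ⟪gradient F v, u - v⟫_ℝ

def l1Ball {n : ℕ} (r : ℝ) : Set (Euc n) := {x | ∑ i, |x i| ≤ r}
def linfBall {n : ℕ} (R : ℝ) : Set (Euc n) := {x | ∀ i, |x i| ≤ R}
def l2Ball {n : ℕ} (r : ℝ) : Set (Euc n) := Metric.closedBall 0 r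
def lqBall {n : ℕ} (q r : ℝ) : Set (Euc n) := {x | ∑ i, |x i| ^ q ≤ r ^ q}

/-!
The dual norm `‖·‖_{K°}` is the support function of `K`, and the supremum is attained: write
`⟪x, w⟫ = ‖w‖_{K°}` with `x ∈ K`. If `y ∈ K` likewise exposes `w + h`, uniform convexity of `K`
(with `z = x` and `γ → 0`) gives `⟪y, w⟫ ≤ (1 - (α/q) r^q) ‖w‖_{K°}` for `r = ‖y - x‖_K`, hence
`‖w + h‖_{K°} ≤ ‖w‖_{K°} + ⟪x, h⟫ + r ‖h‖_{K°} - (α/q) r^q ‖w‖_{K°}`. Squaring, the cross term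
`r ‖w‖ ‖h‖` is absorbed by Young's inequality with exponents `(p, q)`, leaving `O(‖h‖^p)`. The
subgradient inequality gives the matching lower bound `‖w‖_{K°} ⟪x, h⟫`, so, as `p > 1`, the
gradient of `½‖·‖²_{K°}` at `w` is `‖w‖_{K°} x` and the upper bound is the Hölder estimate.
-/

open Real Topology Filter

theorem Real.young_inequality_weighted {a b c p q : ℝ} (hpq : p.HolderConjugate q)
    (ha : 0 ≤ a) (hb : 0 ≤ b) (hc : 0 < c) :
    a * b ≤ c ^ (1 - p) * a ^ p / p + c * b ^ q / q := by
  have hq := hpq.symm.pos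
  have hε : 0 < c ^ (1 / q) := rpow_pos_of_pos hc _
  have hεq : (c ^ (1 / q)) ^ q = c := by
    rw [← rpow_mul hc.le, one_div_mul_cancel hq.ne', rpow_one]
  have hεp : (c ^ (1 / q)) ^ (-p) = c ^ (1 - p) := by
    rw [← rpow_mul hc.le]
    congr 1
    field_simp
    linear_combination hpq.mul_eq_add
  calc a * b = (a / c ^ (1 / q)) * (c ^ (1 / q) * b) := by field_simp
    _ ≤ (a / c ^ (1 / q)) ^ p / p + (c ^ (1 / q) * b) ^ q / q :=
      young_inequality_of_nonneg (by positivity) (by positivity) hpq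
    _ = c ^ (1 - p) * a ^ p / p + c * b ^ q / q := by
      rw [div_rpow ha hε.le, mul_rpow hε.le hb, hεq, ← hεp, rpow_neg hε.le]
      ring

theorem half_sq_le_rpow {p t : ℝ} (hp1 : 1 ≤ p) (hp2 : p ≤ 2) (ht0 : 0 ≤ t) (ht2 : t ≤ 2) :
    t ^ 2 / 2 ≤ t ^ p := by
  rcases ht0.eq_or_lt with rfl | ht
  · simp [zero_rpow (by linarith : p ≠ 0)]
  have hsplit : t ^ 2 = t ^ p * t ^ (2 - p) := by
    rw [← rpow_add ht, add_sub_cancel, rpow_two]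
  have h2 : t ^ (2 - p) ≤ 2 :=
    calc t ^ (2 - p) ≤ 2 ^ (2 - p) := rpow_le_rpow ht0 ht2 (by linarith)
      _ ≤ 2 ^ (1 : ℝ) := rpow_le_rpow_of_exponent_le one_le_two (by linarith)
      _ = 2 := rpow_one 2
  nlinarith [rpow_nonneg ht0 p]

theorem rpow_mul_rpow_le_of_le_one {α s t p : ℝ} (hp2 : p ≤ 2) (hα : 0 < α) (hs0 : 0 < s)
    (hs1 : s ≤ 1) (ht : 0 ≤ t) :
    (α * s ^ 2) ^ (1 - p) * (s * t) ^ p ≤ α ^ (1 - p) * t ^ p := by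
  have hs : (s ^ 2) ^ (1 - p) * s ^ p = s ^ (2 - p) := by
    rw [← rpow_two, ← rpow_mul hs0.le, ← rpow_add hs0]; ring_nf
  have hs2 : s ^ (2 - p) ≤ 1 := rpow_le_one hs0.le hs1 (by linarith)
  calc (α * s ^ 2) ^ (1 - p) * (s * t) ^ p = α ^ (1 - p) * t ^ p * s ^ (2 - p) := by
        rw [mul_rpow hα.le (by positivity), mul_rpow hs0.le ht, ← hs]; ring
    _ ≤ α ^ (1 - p) * t ^ p * 1 := by gcongr
    _ = α ^ (1 - p) * t ^ p := mul_one _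

/-- Here `s, t, u` stand for `‖w‖, ‖h‖, ‖w + h‖` in the dual norm, `r` for `‖y - x‖_K` and
`A` for `⟪x, h⟫`. -/
theorem half_sq_le_half_sq_add_mul_add_rpow {p q α s t u r A : ℝ} (hpq : p.HolderConjugate q)
    (hp2 : p ≤ 2) (hα : 0 < α) (hs0 : 0 ≤ s) (hs1 : s ≤ 1) (ht2 : t ≤ 2) (hu : |u - s| ≤ t)
    (hr : 0 ≤ r) (hu_le : u ≤ s - α / q * r ^ q * s + A + r * t) :
    u ^ 2 / 2 ≤ s ^ 2 / 2 + s * A + (1 + α ^ (1 - p) / p) * t ^ p := by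
  have ht0 : 0 ≤ t := (abs_nonneg _).trans hu
  have hp := hpq.pos
  -- Young's inequality with weight `α s²` trades the cross term for the uniform-convexity gain.
  have hyoung : s * r * t - α / q * s ^ 2 * r ^ q ≤ α ^ (1 - p) / p * t ^ p := by
    rcases hs0.eq_or_lt with rfl | hs
    · simpa using (by positivity : 0 ≤ α ^ (1 - p) / p * t ^ p)
    have hY := Real.young_inequality_weighted hpq (mul_nonneg hs.le ht0) hr
      (by positivity : 0 < α * s ^ 2)
    have hpow := rpow_mul_rpow_le_of_le_one hp2 hα hs hs1 ht0
    calc s * r * t - α / q * s ^ 2 * r ^ q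
        ≤ (α * s ^ 2) ^ (1 - p) * (s * t) ^ p / p := by
          linarith [show α * s ^ 2 * r ^ q / q = α / q * s ^ 2 * r ^ q by ring]
      _ ≤ α ^ (1 - p) * t ^ p / p := by gcongr
      _ = α ^ (1 - p) / p * t ^ p := by ring
  have hsq : (u - s) ^ 2 ≤ t ^ 2 := sq_le_sq' (abs_le.1 hu).1 (abs_le.1 hu).2
  have hmul := mul_le_mul_of_nonneg_left hu_le hs0
  nlinarith [half_sq_le_rpow hpq.lt.le hp2 ht0 ht2]

theorem one_add_rpow_div_le_holder_constant {α p q : ℝ} (hpq : p.HolderConjugate q)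
    (hq : 2 ≤ q) (hα : 0 < α) :
    1 + α ^ (1 - p) / p ≤ 2 * p * (1 + (q / (2 * α)) ^ (1 / (q - 1))) / p := by
  have hp := hpq.pos
  have hexp : 1 / (q - 1) = p - 1 := by
    rw [div_eq_iff (by linarith)]
    linear_combination -hpq.mul_eq_add
  have hbase : α⁻¹ ≤ q / (2 * α) := by
    rw [le_div_iff₀ (by positivity), inv_mul_eq_div, mul_div_assoc, div_self hα.ne']
    linarith
  have hpow : α ^ (1 - p) ≤ (q / (2 * α)) ^ (p - 1) := by
    rw [← neg_sub, Real.rpow_neg hα.le, ← Real.inv_rpow hα.le]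
    exact Real.rpow_le_rpow (by positivity) hbase hpq.sub_one_pos.le
  have hdiv : α ^ (1 - p) / p ≤ α ^ (1 - p) :=
    div_le_self (Real.rpow_nonneg hα.le _) hpq.lt.le
  rw [hexp, mul_div_right_comm, mul_div_cancel_right₀ _ hp.ne']
  nlinarith [Real.rpow_nonneg (by positivity : 0 ≤ q / (2 * α)) (p - 1)]

theorem hasGradientAt_of_abs_sub_inner_le_rpow {E : Type*} [NormedAddCommGroup E]
    [InnerProductSpace ℝ E] [CompleteSpace E] {f : E → ℝ} {x g : E} {C p : ℝ} (hp : 1 < p)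
    (hf : ∀ᶠ h in 𝓝 0, |f (x + h) - f x - ⟪g, h⟫_ℝ| ≤ C * ‖h‖ ^ p) :
    HasGradientAt f g x := by
  rw [hasGradientAt_iff_hasFDerivAt, hasFDerivAt_iff_isLittleO_nhds_zero]
  simp only [InnerProductSpace.toDual_apply_apply]
  have hO : (fun h => f (x + h) - f x - ⟪g, h⟫_ℝ) =O[𝓝 0] fun h : E => ‖h‖ ^ p :=
    Asymptotics.IsBigO.of_bound C <| hf.mono fun h hh => by
      rwa [Real.norm_eq_abs, Real.norm_of_nonneg (by positivity)]
  refine hO.trans_isLittleO ?_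
  have hsmall : Tendsto (fun h : E => ‖h‖ ^ (p - 1)) (𝓝 0) (𝓝 0) := by
    have := ((continuous_norm.rpow_const fun _ => Or.inr (sub_pos.2 hp).le).tendsto (0 : E))
    simpa [Real.zero_rpow (sub_pos.2 hp).ne'] using this
  have ho : (fun h : E => ‖h‖ ^ (p - 1) * ‖h‖) =o[𝓝 0] fun h => (1 : ℝ) * ‖h‖ :=
    ((Asymptotics.isLittleO_one_iff ℝ).2 hsmall).mul_isBigO (Asymptotics.isBigO_refl _ _)
  refine Asymptotics.isLittleO_norm_right.1 (ho.congr' ?_ (by simp))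
  filter_upwards with h
  rcases eq_or_ne h 0 with rfl | hh
  · simp [Real.zero_rpow (by linarith : p ≠ 0)]
  · rw [← Real.rpow_add_one (norm_ne_zero_iff.2 hh), sub_add_cancel]

theorem zero_mem_interior_of_convex_of_neg_mem {E : Type*} [AddCommGroup E] [Module ℝ E]
    [TopologicalSpace E] [IsTopologicalAddGroup E] [ContinuousSMul ℝ E] {K : Set E}
    (hconv : Convex ℝ K) (hsymm : ∀ x ∈ K, -x ∈ K) (hint : (interior K).Nonempty) :
    (0 : E) ∈ interior K := by
  obtain ⟨x, hx⟩ := hint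
  have hneg : -x ∈ interior K := by
    refine interior_maximal (t := Neg.neg ⁻¹' interior K) (fun y hy => ?_)
      (isOpen_interior.preimage continuous_neg)
      (show -x ∈ Neg.neg ⁻¹' interior K by simpa using hx)
    simpa using hsymm _ (interior_subset hy)
  simpa using hconv.interior hx hneg (by norm_num : (0 : ℝ) ≤ 1 / 2)
    (by norm_num : (0 : ℝ) ≤ 1 / 2) (by norm_num)

section PolarGauge

variable {n : ℕ} {K : Set (Euc n)}

theorem convex_polarSet (K : Set (Euc n)) : Convex ℝ (polarSet K) := by
  intro u hu v hv a b ha hb hab x hx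
  rw [inner_add_left, real_inner_smul_left, real_inner_smul_left]
  nlinarith [hu x hx, hv x hx]

theorem neg_mem_polarSet (hsymm : ∀ x ∈ K, -x ∈ K) {w : Euc n} (hw : w ∈ polarSet K) :
    -w ∈ polarSet K := by
  intro x hx
  simpa using hw (-x) (hsymm x hx)

theorem polarSet_mem_nhds_zero (hK : Bornology.IsBounded K) : polarSet K ∈ 𝓝 (0 : Euc n) := by
  obtain ⟨R, hR, hKR⟩ := hK.exists_pos_norm_le
  refine Filter.mem_of_superset (Metric.ball_mem_nhds 0 (inv_pos.2 hR)) fun w hw x hx => ?_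
  rw [mem_ball_zero_iff] at hw
  calc ⟪w, x⟫_ℝ ≤ ‖w‖ * ‖x‖ := real_inner_le_norm w x
    _ ≤ R⁻¹ * R := by gcongr; exact hKR x hx
    _ = 1 := inv_mul_cancel₀ hR.ne'

theorem inner_le_gauge_polarSet (hK : Bornology.IsBounded K) {x : Euc n} (hx : x ∈ K)
    (w : Euc n) : ⟪x, w⟫_ℝ ≤ gauge (polarSet K) w := by
  refine le_of_forall_gt_imp_ge_of_dense fun b hb => ?_
  obtain ⟨c, hc0, hcb, w', hw', rfl⟩ :=
    exists_lt_of_gauge_lt (absorbent_nhds_zero (polarSet_mem_nhds_zero hK)) hb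
  rw [real_inner_smul_right, real_inner_comm]
  nlinarith [hw' x hx]

theorem exists_inner_eq_gauge_polarSet (hK : IsCompact K) (h0 : (0 : Euc n) ∈ K) (w : Euc n) :
    ∃ x ∈ K, ⟪x, w⟫_ℝ = gauge (polarSet K) w := by
  obtain ⟨x, hx, hmax⟩ := hK.exists_isMaxOn ⟨0, h0⟩
    (continuous_id.inner continuous_const : Continuous fun x : Euc n => ⟪x, w⟫_ℝ).continuousOn
  refine ⟨x, hx, le_antisymm (inner_le_gauge_polarSet hK.isBounded hx w) ?_⟩
  have hM : 0 ≤ ⟪x, w⟫_ℝ := by simpa using hmax h0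
  refine le_of_forall_gt_imp_ge_of_dense fun b hb => gauge_le_of_mem (hM.trans hb.le) ?_
  have hb0 : 0 < b := hM.trans_lt hb
  rw [Set.mem_smul_set_iff_inv_smul_mem₀ hb0.ne']
  intro y hy
  rw [real_inner_smul_left, real_inner_comm, inv_mul_le_iff₀ hb0, mul_one]
  exact (hmax hy).trans hb.le

theorem inner_le_gauge_mul_gauge_polarSet (hK : Bornology.IsBounded K)
    (hKabs : Absorbent ℝ K) (a w : Euc n) : ⟪a, w⟫_ℝ ≤ gauge K a * gauge (polarSet K) w := by
  have hbound : ∀ b > gauge K a, ⟪a, w⟫_ℝ ≤ b * gauge (polarSet K) w := by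
    intro b hb
    obtain ⟨c, hc0, hcb, a', ha', rfl⟩ := exists_lt_of_gauge_lt hKabs hb
    rw [real_inner_smul_left]
    nlinarith [inner_le_gauge_polarSet hK ha' w, gauge_nonneg (s := polarSet K) w]
  exact ge_of_tendsto (((continuous_mul_const _).tendsto _).mono_left nhdsWithin_le_nhds)
    (eventually_nhdsWithin_of_forall (s := Set.Ioi (gauge K a)) hbound)

theorem abs_gauge_polarSet_add_sub_le (hK : Bornology.IsBounded K) (hsymm : ∀ x ∈ K, -x ∈ K)
    (w h : Euc n) :
    |gauge (polarSet K) (w + h) - gauge (polarSet K) w| ≤ gauge (polarSet K) h := by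
  have hconv := convex_polarSet K
  have habs : Absorbent ℝ (polarSet K) := absorbent_nhds_zero (polarSet_mem_nhds_zero hK)
  have h1 := gauge_add_le hconv habs w h
  have h2 := gauge_add_le hconv habs (w + h) (-h)
  rw [add_neg_cancel_right, gauge_neg (fun _ => neg_mem_polarSet hsymm)] at h2
  exact abs_sub_le_iff.2 ⟨by linarith, by linarith⟩

theorem UniformlyConvexSet.inner_add_le {α q σ : ℝ} (huc : UniformlyConvexSet K α q)
    {x y w : Euc n} (hx : x ∈ K) (hy : y ∈ K) (hσ : ∀ z ∈ K, ⟪z, w⟫_ℝ ≤ σ)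
    (hyσ : ⟪y, w⟫_ℝ = σ) :
    ⟪x, w⟫_ℝ + α / q * gauge K (x - y) ^ q * σ ≤ σ := by
  set c := α / q * gauge K (x - y) ^ q * σ
  have hγ : ∀ γ ∈ Set.Ioo (0 : ℝ) 1, ⟪x, w⟫_ℝ + c * (1 - γ) ≤ σ := by
    rintro γ ⟨hγ0, hγ1⟩
    have hz := hσ _ (huc x hx y hy y hy γ ⟨hγ0.le, hγ1.le⟩)
    rw [inner_add_left, inner_add_left, real_inner_smul_left, real_inner_smul_left,
      real_inner_smul_left, hyσ] at hz
    have : γ * (⟪x, w⟫_ℝ + c * (1 - γ) - σ) ≤ 0 := by linear_combination hz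
    nlinarith
  have hlim :
      Tendsto (fun γ : ℝ => ⟪x, w⟫_ℝ + c * (1 - γ)) (𝓝[>] 0) (𝓝 (⟪x, w⟫_ℝ + c)) := by
    have : Continuous (fun γ : ℝ => ⟪x, w⟫_ℝ + c * (1 - γ)) := by fun_prop
    simpa using (this.tendsto 0).mono_left nhdsWithin_le_nhds
  exact le_of_tendsto hlim (eventually_of_mem (Ioo_mem_nhdsGT one_pos) hγ)

theorem half_sq_gauge_polarSet_add_inner_le (hK : Bornology.IsBounded K)
    (hsymm : ∀ x ∈ K, -x ∈ K) {w x : Euc n} (hx : x ∈ K)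
    (hxw : ⟪x, w⟫_ℝ = gauge (polarSet K) w) (v : Euc n) :
    gauge (polarSet K) w ^ 2 / 2 + gauge (polarSet K) w * ⟪x, v - w⟫_ℝ
      ≤ gauge (polarSet K) v ^ 2 / 2 := by
  have hle := inner_le_gauge_polarSet hK hx v
  have hge : -gauge (polarSet K) v ≤ ⟪x, v⟫_ℝ := by
    simpa [neg_le] using inner_le_gauge_polarSet hK (hsymm x hx) v
  rw [inner_sub_right, hxw]
  nlinarith [sq_le_sq' hge hle, sq_nonneg (⟪x, v⟫_ℝ - gauge (polarSet K) w)]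

theorem half_sq_gauge_polarSet_add_le {α p q : ℝ} (huc : UniformlyConvexSet K α q)
    (hpq : p.HolderConjugate q) (hp2 : p ≤ 2) (hα : 0 < α) (hK : IsCompact K)
    (hsymm : ∀ x ∈ K, -x ∈ K) (hK0 : K ∈ 𝓝 (0 : Euc n)) {w x h : Euc n}
    (hw : gauge (polarSet K) w ≤ 1) (hx : x ∈ K) (hxw : ⟪x, w⟫_ℝ = gauge (polarSet K) w)
    (hh : gauge (polarSet K) h ≤ 2) :
    gauge (polarSet K) (w + h) ^ 2 / 2 ≤ gauge (polarSet K) w ^ 2 / 2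
      + gauge (polarSet K) w * ⟪x, h⟫_ℝ
      + (1 + α ^ (1 - p) / p) * gauge (polarSet K) h ^ p := by
  have hbdd := hK.isBounded
  obtain ⟨y, hy, hyw⟩ := exists_inner_eq_gauge_polarSet hK (mem_of_mem_nhds hK0) (w + h)
  have hkey := huc.inner_add_le hy hx (fun z hz => inner_le_gauge_polarSet hbdd hz w) hxw
  have hcross := inner_le_gauge_mul_gauge_polarSet hbdd (absorbent_nhds_zero hK0) (y - x) h
  refine half_sq_le_half_sq_add_mul_add_rpow hpq hp2 hα (gauge_nonneg w) hw hh
    (abs_gauge_polarSet_add_sub_le hbdd hsymm w h) (gauge_nonneg (s := K) (y - x)) ?_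
  rw [← hyw, inner_add_right]
  rw [inner_sub_left] at hcross
  linarith

theorem hasGradientAt_half_sq_gauge_polarSet {α p q : ℝ} (huc : UniformlyConvexSet K α q)
    (hpq : p.HolderConjugate q) (hp2 : p ≤ 2) (hα : 0 < α) (hK : IsCompact K)
    (hsymm : ∀ x ∈ K, -x ∈ K) (hK0 : K ∈ 𝓝 (0 : Euc n)) {w x : Euc n}
    (hw : gauge (polarSet K) w ≤ 1) (hx : x ∈ K) (hxw : ⟪x, w⟫_ℝ = gauge (polarSet K) w) :
    HasGradientAt (fun d => gauge (polarSet K) d ^ 2 / 2) (gauge (polarSet K) w • x) w := by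
  obtain ⟨r, hr, hball⟩ := Metric.mem_nhds_iff.1 (polarSet_mem_nhds_zero hK.isBounded)
  have hgauge (h : Euc n) : gauge (polarSet K) h ≤ ‖h‖ / r :=
    (le_div_iff₀' hr).2 (mul_gauge_le_norm hball)
  refine hasGradientAt_of_abs_sub_inner_le_rpow (C := (1 + α ^ (1 - p) / p) / r ^ p) hpq.lt ?_
  filter_upwards [Metric.ball_mem_nhds (0 : Euc n) (by positivity : 0 < 2 * r)] with h hh
  have hh2 : gauge (polarSet K) h ≤ 2 := by
    rw [mem_ball_zero_iff] at hh
    exact (hgauge h).trans ((div_le_iff₀ hr).2 hh.le)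
  have hup := half_sq_gauge_polarSet_add_le huc hpq hp2 hα hK hsymm hK0 hw hx hxw hh2
  have hlow := half_sq_gauge_polarSet_add_inner_le hK.isBounded hsymm hx hxw (w + h)
  rw [add_sub_cancel_left] at hlow
  rw [real_inner_smul_left, abs_of_nonneg (by linarith)]
  have hp := hpq.pos
  calc _ ≤ (1 + α ^ (1 - p) / p) * gauge (polarSet K) h ^ p := by linarith
    _ ≤ (1 + α ^ (1 - p) / p) * (‖h‖ / r) ^ p := by gcongr; exacts [gauge_nonneg h, hgauge h]
    _ = (1 + α ^ (1 - p) / p) / r ^ p * ‖h‖ ^ p := by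
      rw [Real.div_rpow (norm_nonneg h) hr.le]; ring

end PolarGauge

theorem holder_smoothness_of_half_sq_polar_gauge_general {n : ℕ}
    (K : Set (Euc n)) (hKcomp : IsCompact K) (hKconv : Convex ℝ K)
    (hKsymm : ∀ x ∈ K, -x ∈ K) (hKint : (interior K).Nonempty)
    (α q p : ℝ) (hα : 0 < α) (hq : 2 ≤ q) (hp1 : 1 < p) (hp2 : p ≤ 2)
    (hpq : 1 / p + 1 / q = 1)
    (huc : UniformlyConvexSet K α q) :
    ∀ d₁ ∈ polarSet K, ∀ d₂ ∈ polarSet K,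
      gauge (polarSet K) d₂ ^ 2 / 2
        ≤ gauge (polarSet K) d₁ ^ 2 / 2
          + ⟪gradient (fun d => gauge (polarSet K) d ^ 2 / 2) d₁, d₂ - d₁⟫_ℝ
          + 2 * p * (1 + (q / (2 * α)) ^ (1 / (q - 1))) / p
              * gauge (polarSet K) (d₂ - d₁) ^ p := by
  have hpq' : p.HolderConjugate q :=
    Real.holderConjugate_iff.2 ⟨hp1, by simpa only [one_div] using hpq⟩
  have hK0 : K ∈ 𝓝 (0 : Euc n) :=
    mem_interior_iff_mem_nhds.1 (zero_mem_interior_of_convex_of_neg_mem hKconv hKsymm hKint)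
  intro d₁ hd₁ d₂ hd₂
  have hg₁ : gauge (polarSet K) d₁ ≤ 1 := gauge_le_one_of_mem hd₁
  obtain ⟨x, hx, hxd⟩ := exists_inner_eq_gauge_polarSet hKcomp (mem_of_mem_nhds hK0) d₁
  have hd : gauge (polarSet K) (d₂ - d₁) ≤ 2 := by
    have := abs_le.1 (abs_gauge_polarSet_add_sub_le hKcomp.isBounded hKsymm (d₂ - d₁) d₁)
    rw [sub_add_cancel] at this
    linarith [gauge_le_one_of_mem hd₂]
  have hbound := half_sq_gauge_polarSet_add_le huc hpq' hp2 hα hKcomp hKsymm hK0 hg₁ hx hxd hd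
  rw [add_sub_cancel] at hbound
  have hgrad :=
    (hasGradientAt_half_sq_gauge_polarSet huc hpq' hp2 hα hKcomp hKsymm hK0 hg₁ hx hxd).gradient
  rw [hgrad, real_inner_smul_left]
  calc _ ≤ _ := hbound
    _ ≤ _ := by
      gcongr
      · exact Real.rpow_nonneg (gauge_nonneg _) p
      · exact one_add_rpow_div_le_holder_constant hpq' hq hα

/-- If `K` is smooth and `(α,q)`-uniformly convex, then `½‖·‖²_{K°}` is
`(L, p)`-Hölder smooth on `K°` w.r.t. `‖·‖_{K°}`, with `L = 2p(1 + (q/(2α))^{1/(q-1)})`. -/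
theorem holder_smoothness_of_half_sq_polar_gauge {n : ℕ}
    (K : Set (Euc n)) (hKcomp : IsCompact K) (hKconv : Convex ℝ K)
    (hKsymm : ∀ x ∈ K, -x ∈ K) (hKint : (interior K).Nonempty)
    (hsmooth : SmoothSet K)
    (α q p : ℝ) (hα : 0 < α) (hq : 2 ≤ q) (hp1 : 1 < p) (hp2 : p ≤ 2)
    (hpq : 1 / p + 1 / q = 1)
    (huc : UniformlyConvexSet K α q) :
    ∀ d₁ ∈ polarSet K, ∀ d₂ ∈ polarSet K,
      gauge (polarSet K) d₂ ^ 2 / 2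
        ≤ gauge (polarSet K) d₁ ^ 2 / 2
          + ⟪gradient (fun d => gauge (polarSet K) d ^ 2 / 2) d₁, d₂ - d₁⟫_ℝ
          + 2 * p * (1 + (q / (2 * α)) ^ (1 / (q - 1))) / p
              * gauge (polarSet K) (d₂ - d₁) ^ p :=
  holder_smoothness_of_half_sq_polar_gauge_general K hKcomp hKconv hKsymm hKint α q p hα hq hp1 hp2
    hpq huc
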